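/- One-step descent for the z-iterates (appendix lemma for SADOM). Under the stated hypotheses, (1/κ)‖ẑ⁺ − z*‖² + (4/(3κ))‖m⁺‖_P² ≤ (1/κ − π)‖ẑ − z*‖² + (1 − (4χ)⁻¹ + 3κπ/2)·(4/(3κ))‖m‖_P² − 2ν⁻¹⟨y_g + z_g − (y* + z*), z − z*⟩ + κν⁻²(1 + 6χ)‖y_g + z_g‖_P² + 2π‖z_g − z*‖² + (2κπ² − π)‖z_g − z‖². -/

import Mathlib

open MeasureTheory RealInnerProductSpace
open scoped ENNReal

noncomputable section

/-- The space `E = (ℝ^d)^n` with the standard Euclidean inner product. -/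
abbrev Vs (d n : ℕ) : Type := EuclideanSpace ℝ (Fin n × Fin d)

/-- The consensus subspace `L = {(x₁,…,xₙ) : x₁ = ⋯ = xₙ}` of `(ℝ^d)^n`. -/
def consensus (d n : ℕ) : Submodule ℝ (Vs d n) where
  carrier := {x | ∀ i j : Fin n, ∀ k : Fin d, x (i, k) = x (j, k)}
  add_mem' := by
    intro a b ha hb i j k
    simp only [Set.mem_setOf_eq] at ha hb
    simp [PiLp.add_apply, ha i j k, hb i j k]
  zero_mem' := by intro i j k; rfl
  smul_mem' := by
    intro c a ha i j k
    simp only [Set.mem_setOf_eq] at ha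
    simp [PiLp.smul_apply, ha i j k]

/-- Orthogonal projection of `E` onto `L⊥`. -/
def projP (d n : ℕ) (x : Vs d n) : Vs d n :=
  (Submodule.orthogonalProjectionOnto (consensus d n)ᗮ x : Vs d n)

/-- The Kronecker product `W ⊗ I_d` acting on `E = (ℝ^d)^n`. -/
def kron {d n : ℕ} (W : Matrix (Fin n) (Fin n) ℝ) (x : Vs d n) : Vs d n :=
  WithLp.toLp 2 (fun p : Fin n × Fin d => ∑ j, W p.1 j * x (j, p.2))

/-!
Write `a = ẑ - z*`, `b = z_g - z`, `c = P(y_g + z_g)`, `p = P m` and `u = κν⁻¹(y_g + z_g) + m`.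
Since `W ⊗ I_d` kills `L` and maps into `L⊥`, the mixing step cancels from `ẑ⁺`:
`ẑ⁺ - z* = a + κπ b - κν⁻¹ c`, while `P m⁺ = P u - (W ⊗ I_d)(P u)` with `P u = κν⁻¹ c + p`, so the
contraction hypothesis bounds `‖P m⁺‖²` by `(1 - χ⁻¹)‖κν⁻¹ c + p‖²`. The claim is then an
inequality between quadratic expressions in `a, b, c, p`: the difference of its two sides is
`π‖a + b + 2p‖² + κ‖πb + ν⁻¹c‖²` plus a quadratic form in `(κν⁻¹ c, p)` whose discriminant is
nonpositive as soon as `χ ≥ 1`.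
-/

open scoped Matrix

section InnerProductSpace

variable {E : Type*} [NormedAddCommGroup E] [InnerProductSpace ℝ E]

theorem quadratic_form_nonneg_of_discrim_nonpos {a b c : ℝ} (ha : 0 < a)
    (hdisc : discrim a b c ≤ 0) (x y : E) :
    0 ≤ a * ‖x‖ ^ 2 + b * ⟪x, y⟫ + c * ‖y‖ ^ 2 := by
  have hsq : ‖(2 * a) • x + b • y‖ ^ 2
      = 4 * a * (a * ‖x‖ ^ 2 + b * ⟪x, y⟫ + c * ‖y‖ ^ 2) + discrim a b c * ‖y‖ ^ 2 := by
    rw [discrim, norm_add_sq_real, norm_smul, norm_smul, inner_smul_left, inner_smul_right,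
      Real.norm_eq_abs, Real.norm_eq_abs, mul_pow, mul_pow, sq_abs, sq_abs]
    simp only [conj_trivial]
    ring
  have h4a : 0 ≤ 4 * a * (a * ‖x‖ ^ 2 + b * ⟪x, y⟫ + c * ‖y‖ ^ 2) := by
    linarith [sq_nonneg ‖(2 * a) • x + b • y‖,
      mul_nonpos_of_nonpos_of_nonneg hdisc (sq_nonneg ‖y‖)]
  exact nonneg_of_mul_nonneg_right h4a (by positivity)

theorem four_thirds_norm_sq_add_two_inner_le {χ : ℝ} (hχ : 1 ≤ χ) {x y q : E}
    (hq : ‖q‖ ^ 2 ≤ (1 - χ⁻¹) * ‖x + y‖ ^ 2) :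
    4 / 3 * ‖q‖ ^ 2 + 2 * ⟪x, y⟫ ≤ (6 * χ - 1) * ‖x‖ ^ 2 + (4 / 3 - (3 * χ)⁻¹) * ‖y‖ ^ 2 := by
  have hχ0 : 0 < χ := by linarith
  have hs : 0 < χ⁻¹ := inv_pos.2 hχ0
  have hs1 : χ⁻¹ ≤ 1 := inv_le_one_of_one_le₀ hχ
  have hχs : χ * χ⁻¹ = 1 := mul_inv_cancel₀ hχ0.ne'
  have hdisc : discrim (6 * χ - 7 / 3 + 4 / 3 * χ⁻¹) (-(14 / 3 - 8 / 3 * χ⁻¹)) χ⁻¹ ≤ 0 := by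
    -- the discriminant equals `-(20 + 140 χ⁻¹ - 16 χ⁻²) / 9`
    rw [discrim]
    nlinarith
  have hQ := quadratic_form_nonneg_of_discrim_nonpos (by linarith) hdisc x y
  rw [norm_add_sq_real] at hq
  linear_combination hQ + 4 / 3 * hq

theorem descent_inequality {κ π r χ : ℝ} (hκ : 0 < κ) (hπ : 0 < π) (hχ : 1 ≤ χ) (a b c p q : E)
    (hq : ‖q‖ ^ 2 ≤ (1 - χ⁻¹) * ‖(κ * r) • c + p‖ ^ 2) :
    (1 / κ) * ‖a + (κ * π) • b - (κ * r) • c‖ ^ 2 + (4 / (3 * κ)) * ‖q‖ ^ 2 ≤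
      (1 / κ - π) * ‖a‖ ^ 2 + (1 - (4 * χ)⁻¹ + 3 * κ * π / 2) * (4 / (3 * κ)) * ‖p‖ ^ 2
        - 2 * r * ⟪c, a + p⟫ + κ * r ^ 2 * (1 + 6 * χ) * ‖c‖ ^ 2
        + 2 * π * ‖a + b + p‖ ^ 2 + (2 * κ * π ^ 2 - π) * ‖b‖ ^ 2 := by
  have hcons := four_thirds_norm_sq_add_two_inner_le hχ hq
  have hsq₁ : 0 ≤ π * ‖a + b + (2 : ℝ) • p‖ ^ 2 := by positivity
  have hsq₂ : 0 ≤ κ * ‖π • b + r • c‖ ^ 2 := by positivity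
  simp only [← real_inner_self_eq_norm_sq, inner_add_left, inner_add_right, inner_sub_left,
    inner_sub_right, real_inner_smul_left, real_inner_smul_right, real_inner_comm a b,
    real_inner_comm a c, real_inner_comm a p, real_inner_comm b c, real_inner_comm b p]
    at hcons hsq₁ hsq₂ ⊢
  linear_combination (norm := skip) hsq₁ + hsq₂ + κ⁻¹ * hcons
  refine le_of_eq ?_
  field_simp
  ring

end InnerProductSpace

section Consensus

variable {d n : ℕ}

theorem kron_sub (W : Matrix (Fin n) (Fin n) ℝ) (x y : Vs d n) :
    kron W (x - y) = kron W x - kron W y := by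
  ext p
  simp only [kron, PiLp.sub_apply, mul_sub, Finset.sum_sub_distrib]

theorem inner_kron_left (W : Matrix (Fin n) (Fin n) ℝ) (x y : Vs d n) :
    ⟪kron W x, y⟫ = ⟪x, kron Wᵀ y⟫ := by
  simp only [PiLp.inner_apply, kron, Fintype.sum_prod_type, Matrix.transpose_apply,
    RCLike.inner_apply, conj_trivial, Finset.mul_sum, Finset.sum_mul]
  conv_lhs => enter [2, i]; rw [Finset.sum_comm]
  rw [Finset.sum_comm]
  refine Finset.sum_congr rfl fun j _ => ?_
  rw [Finset.sum_comm]
  exact Finset.sum_congr rfl fun k _ => Finset.sum_congr rfl fun i _ => by ring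

theorem kron_eq_zero_of_mem_consensus {W : Matrix (Fin n) (Fin n) ℝ}
    (hrow : ∀ i, ∑ j, W i j = 0) {x : Vs d n} (hx : x ∈ consensus d n) : kron W x = 0 := by
  ext ⟨i, k⟩
  calc ∑ j, W i j * x (j, k) = ∑ j, W i j * x (i, k) :=
        Finset.sum_congr rfl fun j _ => by rw [hx j i k]
    _ = (∑ j, W i j) * x (i, k) := (Finset.sum_mul _ _ _).symm
    _ = 0 := by rw [hrow i, zero_mul]

theorem kron_mem_orthogonal_consensus {W : Matrix (Fin n) (Fin n) ℝ}
    (hcol : ∀ j, ∑ i, W i j = 0) (x : Vs d n) : kron W x ∈ (consensus d n)ᗮ := by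
  rw [Submodule.mem_orthogonal]
  intro u hu
  rw [real_inner_comm, inner_kron_left, kron_eq_zero_of_mem_consensus (W := Wᵀ) hcol hu,
    inner_zero_right]

theorem projP_eq_starProjection : projP d n = (consensus d n)ᗮ.starProjection := rfl

theorem projP_add (x y : Vs d n) : projP d n (x + y) = projP d n x + projP d n y :=
  map_add (consensus d n)ᗮ.starProjection x y

theorem projP_sub (x y : Vs d n) : projP d n (x - y) = projP d n x - projP d n y :=
  map_sub (consensus d n)ᗮ.starProjection x y

theorem projP_smul (r : ℝ) (x : Vs d n) : projP d n (r • x) = r • projP d n x :=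
  map_smul (consensus d n)ᗮ.starProjection r x

theorem projP_mem (x : Vs d n) : projP d n x ∈ (consensus d n)ᗮ :=
  (consensus d n)ᗮ.starProjection_apply_mem x

theorem projP_eq_self_of_mem {x : Vs d n} (hx : x ∈ (consensus d n)ᗮ) : projP d n x = x :=
  Submodule.starProjection_eq_self_iff.mpr hx

theorem projP_eq_zero_of_mem {x : Vs d n} (hx : x ∈ consensus d n) : projP d n x = 0 :=
  (Submodule.starProjection_apply_eq_zero_iff _).mpr (Submodule.le_orthogonal_orthogonal _ hx)

theorem sub_projP_mem_consensus (x : Vs d n) : x - projP d n x ∈ consensus d n := by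
  have h := (consensus d n)ᗮ.sub_starProjection_mem_orthogonal x
  rwa [Submodule.orthogonal_orthogonal] at h

theorem inner_projP_left_of_mem {w : Vs d n} (hw : w ∈ (consensus d n)ᗮ) (x : Vs d n) :
    ⟪projP d n x, w⟫ = ⟪x, w⟫ := by
  rw [projP_eq_starProjection, Submodule.inner_starProjection_left_eq_right,
    Submodule.starProjection_eq_self_iff.mpr hw]

theorem kron_projP {W : Matrix (Fin n) (Fin n) ℝ} (hrow : ∀ i, ∑ j, W i j = 0) (x : Vs d n) :
    kron W (projP d n x) = kron W x := by
  rw [eq_comm, ← sub_eq_zero, ← kron_sub]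
  exact kron_eq_zero_of_mem_consensus hrow (sub_projP_mem_consensus x)

end Consensus

theorem z_one_step_descent_general
    {d n : ℕ}
    (W : Matrix (Fin n) (Fin n) ℝ) (hWsymm : W.IsSymm)
    (hWker : ∀ v : Fin n → ℝ, W.mulVec v = 0 ↔ ∃ c, ∀ i, v i = c)
    (χ : ℝ) (hχ : 1 ≤ χ)
    (hcontr : ∀ u ∈ (consensus d n)ᗮ, ‖kron W u - u‖ ^ 2 ≤ (1 - χ⁻¹) * ‖u‖ ^ 2)
    (κ π ν : ℝ) (hκ : 0 < κ) (hπ : 0 < π)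
    (yg zg m : Vs d n)
    (z zstar : Vs d n) (hz : z ∈ (consensus d n)ᗮ) (hzstar : zstar ∈ (consensus d n)ᗮ)
    (ystar : Vs d n) (hyz : ystar + zstar ∈ consensus d n)
    (zp : Vs d n)
    (hzp : zp = z + (κ * π) • (zg - z) - kron W ((κ * ν⁻¹) • (yg + zg) + m))
    (mp : Vs d n)
    (hmp : mp = (κ * ν⁻¹) • (yg + zg) + m - kron W ((κ * ν⁻¹) • (yg + zg) + m))
    (zhat : Vs d n) (hzhat : zhat = z - projP d n m)
    (zhatp : Vs d n) (hzhatp : zhatp = zp - projP d n mp) :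
    (1 / κ) * ‖zhatp - zstar‖ ^ 2 + (4 / (3 * κ)) * ‖projP d n mp‖ ^ 2 ≤
      (1 / κ - π) * ‖zhat - zstar‖ ^ 2
        + (1 - (4 * χ)⁻¹ + 3 * κ * π / 2) * (4 / (3 * κ)) * ‖projP d n m‖ ^ 2
        - 2 * ν⁻¹ * ⟪yg + zg - (ystar + zstar), z - zstar⟫
        + κ * ν⁻¹ ^ 2 * (1 + 6 * χ) * ‖projP d n (yg + zg)‖ ^ 2
        + 2 * π * ‖zg - zstar‖ ^ 2
        + (2 * κ * π ^ 2 - π) * ‖zg - z‖ ^ 2 := by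
  have hrow : ∀ i, ∑ j, W i j = 0 := fun i => by
    simpa [Matrix.mulVec, dotProduct] using congrFun ((hWker _).mpr ⟨1, fun _ => rfl⟩) i
  have hcol : ∀ j, ∑ i, W i j = 0 := fun j => by simpa only [hWsymm.apply] using hrow j
  set u := (κ * ν⁻¹) • (yg + zg) + m
  have hPu : projP d n u = (κ * ν⁻¹) • projP d n (yg + zg) + projP d n m := by
    rw [projP_add, projP_smul]
  have hPmp : projP d n mp = projP d n u - kron W u := by
    rw [hmp, projP_sub, projP_eq_self_of_mem (kron_mem_orthogonal_consensus hcol u)]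
  have hmp_contr : ‖projP d n mp‖ ^ 2
      ≤ (1 - χ⁻¹) * ‖(κ * ν⁻¹) • projP d n (yg + zg) + projP d n m‖ ^ 2 := by
    rw [hPmp, ← kron_projP hrow, norm_sub_rev, ← hPu]
    exact hcontr _ (projP_mem u)
  have hzhatp_sub : zhatp - zstar
      = (zhat - zstar) + (κ * π) • (zg - z) - (κ * ν⁻¹) • projP d n (yg + zg) := by
    rw [hzhatp, hzp, hPmp, hPu, hzhat]
    abel
  have hinner : ⟪yg + zg - (ystar + zstar), z - zstar⟫
      = ⟪projP d n (yg + zg), (zhat - zstar) + projP d n m⟫ := by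
    rw [← inner_projP_left_of_mem (sub_mem hz hzstar), projP_sub, projP_eq_zero_of_mem hyz,
      sub_zero, hzhat, sub_right_comm, sub_add_cancel]
  have hzg : zg - zstar = (zhat - zstar) + (zg - z) + projP d n m := by
    rw [hzhat]
    abel
  rw [hzhatp_sub, hinner, hzg]
  exact descent_inequality hκ hπ hχ _ _ _ _ _ hmp_contr

/-- One-step descent for the z-iterates (appendix lemma for SADOM):
with `z⁺ := z + κπ(z_g − z) − (W ⊗ I_d)(κν⁻¹(y_g + z_g) + m)`,
`m⁺ := κν⁻¹(y_g + z_g) + m − (W ⊗ I_d)(κν⁻¹(y_g + z_g) + m)`,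
`ẑ := z − Pm`, `ẑ⁺ := z⁺ − Pm⁺`, one has
`(1/κ)‖ẑ⁺ − z*‖² + (4/(3κ))‖m⁺‖_P² ≤ (1/κ − π)‖ẑ − z*‖²
  + (1 − (4χ)⁻¹ + 3κπ/2)(4/(3κ))‖m‖_P² − 2ν⁻¹⟪y_g + z_g − (y* + z*), z − z*⟫
  + κν⁻²(1 + 6χ)‖y_g + z_g‖_P² + 2π‖z_g − z*‖² + (2κπ² − π)‖z_g − z‖²`. -/
theorem z_one_step_descent
    {d n : ℕ} (hd : 0 < d) (hn : 0 < n)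
    (W : Matrix (Fin n) (Fin n) ℝ) (hWsymm : W.IsSymm) (hWpsd : W.PosSemidef)
    (hWker : ∀ v : Fin n → ℝ, W.mulVec v = 0 ↔ ∃ c, ∀ i, v i = c)
    (χ : ℝ) (hχ : 1 ≤ χ)
    (hcontr : ∀ u ∈ (consensus d n)ᗮ, ‖kron W u - u‖ ^ 2 ≤ (1 - χ⁻¹) * ‖u‖ ^ 2)
    (κ π ν : ℝ) (hκ : 0 < κ) (hπ : 0 < π) (hν : 0 < ν)
    (yg zg m : Vs d n)
    (z zstar : Vs d n) (hz : z ∈ (consensus d n)ᗮ) (hzstar : zstar ∈ (consensus d n)ᗮ)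
    (ystar : Vs d n) (hyz : ystar + zstar ∈ consensus d n)
    (zp : Vs d n)
    (hzp : zp = z + (κ * π) • (zg - z) - kron W ((κ * ν⁻¹) • (yg + zg) + m))
    (mp : Vs d n)
    (hmp : mp = (κ * ν⁻¹) • (yg + zg) + m - kron W ((κ * ν⁻¹) • (yg + zg) + m))
    (zhat : Vs d n) (hzhat : zhat = z - projP d n m)
    (zhatp : Vs d n) (hzhatp : zhatp = zp - projP d n mp) :
    (1 / κ) * ‖zhatp - zstar‖ ^ 2 + (4 / (3 * κ)) * ‖projP d n mp‖ ^ 2 ≤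
      (1 / κ - π) * ‖zhat - zstar‖ ^ 2
        + (1 - (4 * χ)⁻¹ + 3 * κ * π / 2) * (4 / (3 * κ)) * ‖projP d n m‖ ^ 2
        - 2 * ν⁻¹ * ⟪yg + zg - (ystar + zstar), z - zstar⟫
        + κ * ν⁻¹ ^ 2 * (1 + 6 * χ) * ‖projP d n (yg + zg)‖ ^ 2
        + 2 * π * ‖zg - zstar‖ ^ 2
        + (2 * κ * π ^ 2 - π) * ‖zg - z‖ ^ 2 :=
  z_one_step_descent_general W hWsymm hWker χ hχ hcontr κ π ν hκ hπ yg zg m z zstar hz hzstar ystar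
    hyz zp hzp mp hmp zhat hzhat zhatp hzhatp
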